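/- arXiv:2111.12347 — 3 statements merged into one kernel-verified Lean document; each statement's English description precedes it below -/
import Mathlib

section
/- Let n ≥ 2, let Ω ⊆ ℝⁿ be an open set, and let u : Ω → ℝ be continuously differentiable with ∫_Ω |∇u(x)| dx < ∞. Then the affine energy E_Ω(u) equals 0 if and only if there exists ξ̃ in the unit sphere S^{n−1} such that ∇u(x)·ξ̃ = 0 for every x ∈ Ω. -/
/-!
Write `Ψ(ξ) = Ψ_ξ(u)`. Since `∇u` is continuous, `Ψ(ξ) = 0` exactly when `∇u · ξ ≡ 0` on
`Ω`, and `Ψ(ξ) ≤ Ψ(η) + ‖∇u‖_{L¹(Ω)} |ξ - η|`, so `Ψ` is continuous. As `α_n > 0`,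
`E_Ω(u) = 0` means `∫_{S^{n-1}} Ψ^{-n} = ∞`.

If `Ψ` has no zero on the sphere, it is bounded below there by compactness, and the sphere has
finite `(n-1)`-dimensional Hausdorff measure, being covered by the images of two balls of
`ℝ^{n-1}` under smooth inverse stereographic projections; so the integral is finite.
If `Ψ(ξ̃) = 0`, then `Ψ ≤ C r` on the cap of radius `r` about `ξ̃`, and this cap has measure
`≳ r^{n-1}`, since its image under the (1-Lipschitz) orthogonal projection onto `ξ̃^⊥` contains
a ball of radius `r / 2`. Hence `∫ Ψ^{-n} ≳ r⁻¹` for every small `r`, and the integral is infinite.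
-/

open MeasureTheory ENNReal

noncomputable section

/-- ω_k: the volume of the unit ball in ℝ^k. -/
def unitBallVol (k : ℕ) : ℝ :=
  (volume (Metric.ball (0 : EuclideanSpace ℝ (Fin k)) 1)).toReal

/-- The constant α_n = (2 ω_{n-1})⁻¹ (n ω_n)^{1 + 1/n}. -/
def alphaConst (n : ℕ) : ℝ :=
  (2 * unitBallVol (n - 1))⁻¹ * (n * unitBallVol n) ^ (1 + 1 / (n : ℝ))

/-- The (n-1)-dimensional Hausdorff (surface) measure on the unit sphere S^{n-1} ⊂ ℝⁿ. -/
def sphereMeasure (n : ℕ) : Measure (EuclideanSpace ℝ (Fin n)) :=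
  (μH[(n : ℝ) - 1]).restrict (Metric.sphere (0 : EuclideanSpace ℝ (Fin n)) 1)

/-- Ψ_ξ(u) = ∫_Ω |∇u(x)·ξ| dx for a function u defined (C¹) on the open set Ω. -/
def PsiOn {n : ℕ} (Ω : Set (EuclideanSpace ℝ (Fin n))) (u : EuclideanSpace ℝ (Fin n) → ℝ)
    (ξ : EuclideanSpace ℝ (Fin n)) : ℝ≥0∞ :=
  ∫⁻ x in Ω, ENNReal.ofReal |fderivWithin ℝ u Ω x ξ|

/-- The affine energy E_Ω(u) = α_n (∫_{S^{n-1}} Ψ_ξ(u)^{-n} dξ)^{-1/n}, computed in the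
extended nonnegative reals (so that 0^{-n} = ∞ and ∞^{-1/n} = 0, matching the conventions). -/
def energyOn {n : ℕ} (Ω : Set (EuclideanSpace ℝ (Fin n)))
    (u : EuclideanSpace ℝ (Fin n) → ℝ) : ℝ≥0∞ :=
  ENNReal.ofReal (alphaConst n) *
    (∫⁻ ξ, (PsiOn Ω u ξ) ^ (-(n : ℝ)) ∂(sphereMeasure n)) ^ (-(1 / (n : ℝ)))

open Metric Module Set Filter Topology
open scoped RealInnerProductSpace

theorem LocallyLipschitz.hausdorffMeasure_image_lt_top {F X : Type*} [NormedAddCommGroup F]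
    [NormedSpace ℝ F] [FiniteDimensional ℝ F] [MeasurableSpace F] [BorelSpace F]
    [MetricSpace X] [MeasurableSpace X] [BorelSpace X] {f : F → X} (hf : LocallyLipschitz f)
    {K : Set F} (hK : IsCompact K) : μH[finrank ℝ F] (f '' K) < ∞ := by
  obtain ⟨C, hC⟩ := hf.locallyLipschitzOn.exists_lipschitzOnWith_of_compact hK
  calc μH[finrank ℝ F] (f '' K) ≤ C ^ (finrank ℝ F : ℝ) * μH[finrank ℝ F] K :=
        hC.hausdorffMeasure_image_le (Nat.cast_nonneg _)
    _ < ∞ := ENNReal.mul_lt_top (ENNReal.rpow_lt_top_of_nonneg (Nat.cast_nonneg _)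
        ENNReal.coe_ne_top) hK.measure_lt_top

theorem setLIntegral_inv_pow_lt_top {X : Type*} [TopologicalSpace X] [MeasurableSpace X]
    {μ : Measure X} {s : Set X} (hs : IsCompact s) (hμs : μ s ≠ ∞) {f : X → ℝ≥0∞}
    (hf : ContinuousOn f s) (hf0 : ∀ x ∈ s, f x ≠ 0) (m : ℕ) :
    ∫⁻ x in s, (f x ^ m)⁻¹ ∂μ < ∞ := by
  have hfin (x : X) (hx : x ∈ s) : (f x ^ m)⁻¹ ≠ ∞ :=
    ENNReal.inv_ne_top.2 (pow_ne_zero _ (hf0 x hx))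
  have hg : ContinuousOn (fun x => ((f x ^ m)⁻¹).toNNReal) s :=
    ENNReal.continuousOn_toNNReal.comp
      ((ENNReal.continuous_pow m).comp_continuousOn hf).inv hfin
  obtain ⟨y, hy⟩ := (hs.image_of_continuousOn hg).bddAbove
  refine setLIntegral_lt_top_of_le_nnreal hμs ⟨y, fun x hx => ?_⟩
  rw [← ENNReal.coe_toNNReal (hfin x hx)]
  exact ENNReal.coe_le_coe.2 (hy (mem_image_of_mem _ hx))

section SphereMeasure

variable {E : Type*} [NormedAddCommGroup E] [InnerProductSpace ℝ E]

lemma sphere_inter_inner_nonpos_subset_image_stereoInvFunAux {v : E} (hv : ‖v‖ = 1) :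
    {x ∈ sphere (0 : E) 1 | ⟪v, x⟫ ≤ 0} ⊆
      (stereoInvFunAux v ∘ (↑)) '' closedBall (0 : (ℝ ∙ v)ᗮ) 2 := by
  rintro x ⟨hx, hvx⟩
  have hxv : x ≠ v := by
    rintro rfl
    norm_num [hv] at hvx
  refine ⟨stereoToFun v x, ?_, congrArg Subtype.val (stereo_left_inv hv (x := ⟨x, hx⟩) hxv)⟩
  have hproj : ‖(ℝ ∙ v)ᗮ.orthogonalProjectionOnto x‖ ≤ 1 :=
    ((ℝ ∙ v)ᗮ.norm_orthogonalProjectionOnto_apply_le x).trans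
      (mem_sphere_zero_iff_norm.1 hx).le
  have hcoef : ‖2 / (1 - ⟪v, x⟫)‖ ≤ 2 := by
    rw [Real.norm_of_nonneg (by apply div_nonneg <;> linarith)]
    exact div_le_self zero_le_two (by linarith)
  rw [mem_closedBall_zero_iff, stereoToFun_apply, norm_smul, innerSL_apply_apply]
  nlinarith [norm_nonneg ((ℝ ∙ v)ᗮ.orthogonalProjectionOnto x)]

lemma closedBall_subset_orthogonalProjectionOnto_image {e : E} (he : ‖e‖ = 1) {r : ℝ}
    (hr : r ≤ 2) :
    closedBall (0 : (ℝ ∙ e)ᗮ) (r / 2) ⊆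
      (ℝ ∙ e)ᗮ.orthogonalProjectionOnto '' (closedBall e r ∩ sphere 0 1) := by
  intro w hw
  rw [mem_closedBall_zero_iff] at hw
  have hw1 : ‖w‖ ≤ 1 := by linarith
  set q := √(1 - ‖w‖ ^ 2)
  have hq : q ^ 2 = 1 - ‖w‖ ^ 2 := Real.sq_sqrt (by nlinarith [norm_nonneg w])
  have hq1 : 1 - ‖w‖ ≤ q := (Real.le_sqrt (by linarith) (by nlinarith [norm_nonneg w])).2
    (by nlinarith [norm_nonneg w])
  have hwe : ⟪(w : E), e⟫ = 0 := Submodule.mem_orthogonal_singleton_iff_inner_left.1 w.2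
  refine ⟨w + q • e, ⟨?_, ?_⟩, ?_⟩
  · rw [mem_closedBall, dist_eq_norm]
    calc ‖(w : E) + q • e - e‖ = ‖(w : E) + (q - 1) • e‖ := by
          rw [sub_smul, one_smul, add_sub_assoc]
      _ ≤ ‖w‖ + |q - 1| := by
          simpa [norm_smul, he] using norm_add_le (w : E) ((q - 1) • e)
      _ ≤ r := by
          rw [abs_of_nonpos (by nlinarith [Real.sqrt_nonneg (1 - ‖w‖ ^ 2)])]
          linarith
  · rw [mem_sphere_zero_iff_norm, ← sq_eq_sq₀ (norm_nonneg _) zero_le_one, norm_add_sq_real,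
      real_inner_smul_right, hwe, norm_smul, he, mul_one, Real.norm_eq_abs, sq_abs, hq,
      Submodule.coe_norm]
    ring
  · rw [map_add, Submodule.orthogonalProjectionOnto_mem_subspace_eq_self, map_smul,
      Submodule.orthogonalProjectionOnto_apply_of_mem_orthogonal
        ((ℝ ∙ e).le_orthogonal_orthogonal (Submodule.mem_span_singleton_self e)),
      smul_zero, add_zero]

variable [FiniteDimensional ℝ E]

lemma finrank_orthogonal_span_singleton_add_one {v : E} (hv : v ≠ 0) :
    finrank ℝ (ℝ ∙ v)ᗮ + 1 = finrank ℝ E := by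
  rw [← (ℝ ∙ v).finrank_add_finrank_orthogonal, finrank_span_singleton hv, add_comm]

lemma cast_finrank_orthogonal_span_singleton {v : E} (hv : v ≠ 0) :
    (finrank ℝ (ℝ ∙ v)ᗮ : ℝ) = finrank ℝ E - 1 := by
  rw [← finrank_orthogonal_span_singleton_add_one hv]
  push_cast
  ring

variable [MeasurableSpace E] [BorelSpace E]

lemma hausdorffMeasure_sphere_inter_inner_nonpos_lt_top {v : E} (hv : ‖v‖ = 1) :
    μH[(finrank ℝ E : ℝ) - 1] {x ∈ sphere (0 : E) 1 | ⟪v, x⟫ ≤ 0} < ∞ := by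
  have hv0 : v ≠ 0 := by rintro rfl; simp at hv
  rw [← cast_finrank_orthogonal_span_singleton hv0]
  refine (measure_mono (sphere_inter_inner_nonpos_subset_image_stereoInvFunAux hv)).trans_lt ?_
  exact (contDiff_stereoInvFunAux.comp (ℝ ∙ v)ᗮ.subtypeL.contDiff).locallyLipschitz
    |>.hausdorffMeasure_image_lt_top (isCompact_closedBall _ _)

theorem hausdorffMeasure_sphere_lt_top :
    μH[(finrank ℝ E : ℝ) - 1] (sphere (0 : E) 1) < ∞ := by
  rcases (sphere (0 : E) 1).eq_empty_or_nonempty with h | ⟨v, hv⟩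
  · simp [h]
  rw [mem_sphere_zero_iff_norm] at hv
  have hcover : sphere (0 : E) 1 ⊆
      {x ∈ sphere 0 1 | ⟪v, x⟫ ≤ 0} ∪ {x ∈ sphere 0 1 | ⟪-v, x⟫ ≤ 0} := by
    intro x hx
    rcases le_total ⟪v, x⟫ 0 with h | h
    · exact Or.inl ⟨hx, h⟩
    · exact Or.inr ⟨hx, by rw [inner_neg_left]; linarith⟩
  refine (measure_mono hcover).trans_lt ((measure_union_le _ _).trans_lt ?_)
  exact ENNReal.add_lt_top.2 ⟨hausdorffMeasure_sphere_inter_inner_nonpos_lt_top hv,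
    hausdorffMeasure_sphere_inter_inner_nonpos_lt_top (by rwa [norm_neg])⟩

lemma le_hausdorffMeasure_closedBall_inter_sphere {e : E} (he : ‖e‖ = 1) {r : ℝ} (hr0 : 0 ≤ r)
    (hr : r ≤ 2) :
    ENNReal.ofReal ((r / 2) ^ finrank ℝ (ℝ ∙ e)ᗮ) *
        μH[finrank ℝ (ℝ ∙ e)ᗮ] (closedBall (0 : (ℝ ∙ e)ᗮ) 1) ≤
      μH[(finrank ℝ E : ℝ) - 1] (closedBall e r ∩ sphere 0 1) := by
  have he0 : e ≠ 0 := by rintro rfl; simp at he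
  rw [← Measure.addHaar_closedBall' _ _ (by positivity),
    ← cast_finrank_orthogonal_span_singleton he0]
  calc _ ≤ μH[finrank ℝ (ℝ ∙ e)ᗮ]
        ((ℝ ∙ e)ᗮ.orthogonalProjectionOnto '' (closedBall e r ∩ sphere 0 1)) :=
        measure_mono (closedBall_subset_orthogonalProjectionOnto_image he hr)
    _ ≤ _ := by
        simpa using (ℝ ∙ e)ᗮ.lipschitzWith_orthogonalProjectionOnto.hausdorffMeasure_image_le
          (Nat.cast_nonneg _) _

theorem setLIntegral_sphere_inv_pow_eq_top {f : E → ℝ≥0∞} {e : E} (he : ‖e‖ = 1) {C : ℝ}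
    (hC : 0 < C) (hf : ∀ ξ ∈ sphere (0 : E) 1, f ξ ≤ ENNReal.ofReal (C * ‖ξ - e‖)) :
    ∫⁻ ξ in sphere (0 : E) 1, (f ξ ^ finrank ℝ E)⁻¹ ∂μH[(finrank ℝ E : ℝ) - 1] = ∞ := by
  have he0 : e ≠ 0 := by rintro rfl; simp at he
  set k := finrank ℝ (ℝ ∙ e)ᗮ
  rw [← finrank_orthogonal_span_singleton_add_one he0]
  set κ := (μH[k] (closedBall (0 : (ℝ ∙ e)ᗮ) 1)).toReal
  have hκ : 0 < κ := ENNReal.toReal_pos (measure_closedBall_pos _ _ one_pos).ne'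
    (isCompact_closedBall _ _).measure_lt_top.ne
  -- on the cap of radius `r` about `e`, the integrand is `≥ (C r)⁻⁽ᵏ⁺¹⁾`
  -- and the cap has measure `≥ (r / 2)ᵏ κ`
  have hcap (r : ℝ) (hr0 : 0 < r) (hr2 : r ≤ 2) :
      ENNReal.ofReal (κ / (2 ^ k * C ^ (k + 1)) * r⁻¹) ≤
        ∫⁻ ξ in sphere (0 : E) 1, (f ξ ^ (k + 1))⁻¹ ∂μH[(↑(k + 1) : ℝ) - 1] := by
    have hmeas : MeasurableSet (closedBall e r ∩ sphere (0 : E) 1) :=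
      measurableSet_closedBall.inter isClosed_sphere.measurableSet
    calc ENNReal.ofReal (κ / (2 ^ k * C ^ (k + 1)) * r⁻¹)
        = ENNReal.ofReal ((C * r) ^ (k + 1))⁻¹ *
            (ENNReal.ofReal ((r / 2) ^ k) * ENNReal.ofReal κ) := by
          rw [← ENNReal.ofReal_mul (by positivity), ← ENNReal.ofReal_mul (by positivity)]
          congr 1
          rw [div_pow]
          field_simp
          ring
      _ ≤ ENNReal.ofReal ((C * r) ^ (k + 1))⁻¹ *
            μH[(↑(k + 1) : ℝ) - 1] (closedBall e r ∩ sphere 0 1) := by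
          gcongr
          rw [ENNReal.ofReal_toReal (isCompact_closedBall _ _).measure_lt_top.ne,
            finrank_orthogonal_span_singleton_add_one he0]
          exact le_hausdorffMeasure_closedBall_inter_sphere he hr0.le hr2
      _ = ∫⁻ _ in closedBall e r ∩ sphere 0 1, ENNReal.ofReal ((C * r) ^ (k + 1))⁻¹
            ∂μH[(↑(k + 1) : ℝ) - 1] := (setLIntegral_const _ _).symm
      _ ≤ ∫⁻ ξ in closedBall e r ∩ sphere 0 1, (f ξ ^ (k + 1))⁻¹
            ∂μH[(↑(k + 1) : ℝ) - 1] := by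
          refine setLIntegral_mono' hmeas fun ξ ⟨hξr, hξ⟩ => ?_
          rw [ENNReal.ofReal_inv_of_pos (by positivity), ENNReal.ofReal_pow (by positivity)]
          gcongr
          exact (hf ξ hξ).trans (ENNReal.ofReal_le_ofReal (by
            gcongr; rw [← dist_eq_norm]; exact hξr))
      _ ≤ _ := lintegral_mono_set inter_subset_right
  have hlim : Tendsto (fun r : ℝ => ENNReal.ofReal (κ / (2 ^ k * C ^ (k + 1)) * r⁻¹))
      (𝓝[>] 0) (𝓝 ∞) :=
    ENNReal.tendsto_ofReal_atTop.comp (tendsto_inv_nhdsGT_zero.const_mul_atTop (by positivity))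
  refine top_unique (le_of_tendsto hlim ?_)
  filter_upwards [Ioc_mem_nhdsGT two_pos] with r hr using hcap r hr.1 hr.2

theorem setLIntegral_sphere_rpow_neg_eq_top_iff {f : E → ℝ≥0∞} {C : ℝ≥0∞} (hC : C ≠ ∞)
    (hf : ∀ ξ η, f ξ ≤ f η + C * edist ξ η) :
    ∫⁻ ξ in sphere (0 : E) 1, f ξ ^ (-(finrank ℝ E : ℝ)) ∂μH[(finrank ℝ E : ℝ) - 1] = ∞ ↔
      ∃ e ∈ sphere (0 : E) 1, f e = 0 := by
  simp only [ENNReal.rpow_neg, ENNReal.rpow_natCast]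
  constructor
  · intro htop
    by_contra! hf0
    exact (setLIntegral_inv_pow_lt_top (isCompact_sphere 0 1) hausdorffMeasure_sphere_lt_top.ne
      (continuous_of_le_add_edist C hC hf).continuousOn hf0 _).ne htop
  · rintro ⟨e, he, hfe⟩
    refine setLIntegral_sphere_inv_pow_eq_top (mem_sphere_zero_iff_norm.1 he)
      (C := C.toReal + 1) (by positivity) fun ξ _ => ?_
    calc f ξ ≤ f e + C * edist ξ e := hf ξ e
      _ = ENNReal.ofReal (C.toReal * ‖ξ - e‖) := by
        rw [hfe, zero_add, ENNReal.ofReal_mul ENNReal.toReal_nonneg, ENNReal.ofReal_toReal hC,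
          ofReal_norm, edist_eq_enorm_sub]
      _ ≤ ENNReal.ofReal ((C.toReal + 1) * ‖ξ - e‖) := by gcongr; linarith

end SphereMeasure

section AffineEnergy

variable {n : ℕ} {Ω : Set (EuclideanSpace ℝ (Fin n))} {u : EuclideanSpace ℝ (Fin n) → ℝ}

lemma PsiOn_le_add_mul_edist (hΩ : IsOpen Ω) (hu : ContDiffOn ℝ 1 u Ω)
    (ξ η : EuclideanSpace ℝ (Fin n)) :
    PsiOn Ω u ξ ≤
      PsiOn Ω u η + (∫⁻ x in Ω, ENNReal.ofReal ‖fderivWithin ℝ u Ω x‖) * edist ξ η := by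
  have hDu : ContinuousOn (fderivWithin ℝ u Ω) Ω :=
    hu.continuousOn_fderivWithin hΩ.uniqueDiffOn le_rfl
  have hmeas : AEMeasurable (fun x => ENNReal.ofReal |fderivWithin ℝ u Ω x η|)
      (volume.restrict Ω) :=
    (ENNReal.continuous_ofReal.comp_continuousOn (hDu.clm_apply continuousOn_const).abs)
      |>.aemeasurable hΩ.measurableSet
  have hpt (L : EuclideanSpace ℝ (Fin n) →L[ℝ] ℝ) :
      ENNReal.ofReal |L ξ| ≤ ENNReal.ofReal |L η| + ENNReal.ofReal ‖L‖ * edist ξ η := by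
    simp only [← Real.enorm_eq_ofReal_abs, ofReal_norm, edist_eq_enorm_sub]
    calc ‖L ξ‖ₑ = ‖L η + L (ξ - η)‖ₑ := by rw [map_sub, add_sub_cancel]
      _ ≤ ‖L η‖ₑ + ‖L (ξ - η)‖ₑ := enorm_add_le _ _
      _ ≤ ‖L η‖ₑ + ‖L‖ₑ * ‖ξ - η‖ₑ := by gcongr; exact L.le_opENorm _
  calc PsiOn Ω u ξ
      ≤ ∫⁻ x in Ω, (ENNReal.ofReal |fderivWithin ℝ u Ω x η| +
          ENNReal.ofReal ‖fderivWithin ℝ u Ω x‖ * edist ξ η) :=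
        setLIntegral_mono' hΩ.measurableSet fun x _ => hpt _
    _ = _ := by
        rw [lintegral_add_left' hmeas, lintegral_mul_const' _ _ (edist_ne_top ξ η), PsiOn]

lemma PsiOn_eq_zero_iff (hΩ : IsOpen Ω) (hu : ContDiffOn ℝ 1 u Ω)
    (ξ : EuclideanSpace ℝ (Fin n)) :
    PsiOn Ω u ξ = 0 ↔ ∀ x ∈ Ω, fderivWithin ℝ u Ω x ξ = 0 := by
  have hcont : ContinuousOn (fun x => ENNReal.ofReal |fderivWithin ℝ u Ω x ξ|) Ω :=
    ENNReal.continuous_ofReal.comp_continuousOn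
      ((hu.continuousOn_fderivWithin hΩ.uniqueDiffOn le_rfl).clm_apply continuousOn_const).abs
  rw [PsiOn, lintegral_eq_zero_iff' (hcont.aemeasurable hΩ.measurableSet)]
  constructor
  · intro h x hx
    simpa using Measure.eqOn_open_of_ae_eq h hΩ hcont continuousOn_const hx
  · intro h
    filter_upwards [ae_restrict_mem hΩ.measurableSet] with x hx
    simp [h x hx]

lemma unitBallVol_pos (k : ℕ) : 0 < unitBallVol k :=
  ENNReal.toReal_pos (measure_ball_pos volume _ one_pos).ne' measure_ball_lt_top.ne

lemma alphaConst_pos (hn : 0 < n) : 0 < alphaConst n :=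
  mul_pos (inv_pos.2 (mul_pos two_pos (unitBallVol_pos _)))
    (Real.rpow_pos_of_pos (mul_pos (Nat.cast_pos.2 hn) (unitBallVol_pos n)) _)

lemma energyOn_eq_zero_iff_lintegral_eq_top (hn : 0 < n) :
    energyOn Ω u = 0 ↔ ∫⁻ ξ, PsiOn Ω u ξ ^ (-(n : ℝ)) ∂sphereMeasure n = ∞ := by
  simp [energyOn, (alphaConst_pos hn).not_ge, hn]

end AffineEnergy

/-- for a C¹ function u on an open set Ω with ∫_Ω |∇u| dx < ∞, the affine
energy E_Ω(u) vanishes iff ∇u·ξ̃ ≡ 0 on Ω for some unit vector ξ̃. -/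
theorem energyOn_eq_zero_iff {n : ℕ} (hn : 2 ≤ n)
    (Ω : Set (EuclideanSpace ℝ (Fin n))) (hΩ : IsOpen Ω)
    (u : EuclideanSpace ℝ (Fin n) → ℝ) (hu : ContDiffOn ℝ 1 u Ω)
    (hgrad : ∫⁻ x in Ω, ENNReal.ofReal ‖fderivWithin ℝ u Ω x‖ < ⊤) :
    energyOn Ω u = 0 ↔
      ∃ ξ ∈ Metric.sphere (0 : EuclideanSpace ℝ (Fin n)) 1,
        ∀ x ∈ Ω, fderivWithin ℝ u Ω x ξ = 0 := by
  have key := setLIntegral_sphere_rpow_neg_eq_top_iff hgrad.ne (PsiOn_le_add_mul_edist hΩ hu)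
  rw [finrank_euclideanSpace_fin] at key
  rw [energyOn_eq_zero_iff_lintegral_eq_top (by omega), sphereMeasure, key]
  simp only [PsiOn_eq_zero_iff hΩ hu]
end
end

section
/- Let n ≥ 2, let μ be a finite Borel measure on ℝⁿ, let σ : ℝⁿ → ℝⁿ be Borel measurable with |σ(x)| = 1 for μ-almost every x, and let A ⊆ ℝⁿ be a Borel set. Then E(μ,σ) ≥ E(μ⌞A, σ) + E(μ⌞Aᶜ, σ), where μ⌞A and μ⌞Aᶜ denote the restrictions of μ to A and to its complement. -/
open MeasureTheory ENNReal

noncomputable section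

/-- Ψ_ξ(μ, σ) = ∫ |σ(x)·ξ| dμ(x). -/
def PsiM {n : ℕ} (μ : Measure (EuclideanSpace ℝ (Fin n)))
    (σ : EuclideanSpace ℝ (Fin n) → EuclideanSpace ℝ (Fin n))
    (ξ : EuclideanSpace ℝ (Fin n)) : ℝ≥0∞ :=
  ∫⁻ x, ENNReal.ofReal |(inner ℝ (σ x) ξ : ℝ)| ∂μ

/-- The affine energy E(μ, σ) = α_n (∫_{S^{n-1}} Ψ_ξ(μ,σ)^{-n} dξ)^{-1/n}, computed in the
extended nonnegative reals (so that 0^{-n} = ∞ and ∞^{-1/n} = 0, matching the conventions). -/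
def energyM {n : ℕ} (μ : Measure (EuclideanSpace ℝ (Fin n)))
    (σ : EuclideanSpace ℝ (Fin n) → EuclideanSpace ℝ (Fin n)) : ℝ≥0∞ :=
  ENNReal.ofReal (alphaConst n) *
    (∫⁻ ξ, (PsiM μ σ ξ) ^ (-(n : ℝ)) ∂(sphereMeasure n)) ^ (-(1 / (n : ℝ)))

/-!
Restriction splits the measure, so `Ψ_ξ(μ, σ) = Ψ_ξ(μ⌞A, σ) + Ψ_ξ(μ⌞Aᶜ, σ)` for every `ξ`, and the
theorem is the reverse Minkowski inequality for the exponent `-n`: the functional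
`F ↦ (∫ F^{-n})^{-1/n}` is superadditive on nonnegative functions. That in turn is the
integrated form of the subadditivity of `(P, a) ↦ P^{n+1} a^{-n}`, the perspective of the convex
function `a ↦ a^{-n}`, applied with `P`, `Q` the two values of the functional.
-/

lemma add_pow_succ_div_add_pow_le (n : ℕ) {a b P Q : ℝ} (ha : 0 < a) (hb : 0 < b)
    (hP : 0 < P) (hQ : 0 < Q) :
    (P + Q) ^ (n + 1) / (a + b) ^ n ≤ P ^ (n + 1) / a ^ n + Q ^ (n + 1) / b ^ n := by
  have hS : 0 < P + Q := by positivity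
  have h := (convexOn_zpow (𝕜 := ℝ) (-(n : ℤ))).2 (Set.mem_Ioi.2 (div_pos ha hP))
    (Set.mem_Ioi.2 (div_pos hb hQ)) (div_pos hP hS).le (div_pos hQ hS).le (by field_simp)
  have e : P / (P + Q) * (a / P) + Q / (P + Q) * (b / Q) = (a + b) / (P + Q) := by
    field_simp
  simp only [smul_eq_mul, e, zpow_neg, zpow_natCast, div_pow, inv_div] at h
  rw [pow_succ, mul_div_right_comm, ← le_div_iff₀ hS]
  convert h using 1
  field_simp
  ring

open NNReal

namespace ENNReal

theorem rpow_le_rpow_of_nonpos {x y : ℝ≥0∞} {z : ℝ} (hz : z ≤ 0) (hxy : x ≤ y) :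
    y ^ z ≤ x ^ z := by
  rw [← neg_neg z, rpow_neg y, rpow_neg x]
  exact ENNReal.inv_le_inv' (rpow_le_rpow hxy (neg_nonneg.2 hz))

theorem add_rpow_succ_mul_add_rpow_neg_le {n : ℕ} (hn : n ≠ 0) {P Q : ℝ≥0∞}
    (hP₀ : P ≠ 0) (hP : P ≠ ∞) (hQ₀ : Q ≠ 0) (hQ : Q ≠ ∞) (a b : ℝ≥0∞) :
    (P + Q) ^ ((n : ℝ) + 1) * (a + b) ^ (-(n : ℝ)) ≤
      P ^ ((n : ℝ) + 1) * a ^ (-(n : ℝ)) + Q ^ ((n : ℝ) + 1) * b ^ (-(n : ℝ)) := by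
  have hneg : -(n : ℝ) < 0 := by simpa using Nat.pos_of_ne_zero hn
  rcases eq_or_ne a 0 with rfl | ha₀
  · simp [zero_rpow_of_neg hneg, hP₀, hP]
  rcases eq_or_ne b 0 with rfl | hb₀
  · simp [zero_rpow_of_neg hneg, hQ₀, hQ]
  rcases eq_or_ne a ∞ with rfl | ha
  · simp [top_rpow_of_neg hneg]
  rcases eq_or_ne b ∞ with rfl | hb
  · simp [top_rpow_of_neg hneg]
  lift a to ℝ≥0 using ha
  lift b to ℝ≥0 using hb
  lift P to ℝ≥0 using hP
  lift Q to ℝ≥0 using hQ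
  simp only [ne_eq, coe_eq_zero] at ha₀ hb₀ hP₀ hQ₀
  simp only [rpow_neg, ← Nat.cast_succ, rpow_natCast, ← div_eq_mul_inv, ← coe_add, ← coe_pow]
  rw [← coe_div, ← coe_div, ← coe_div, ← coe_add, coe_le_coe, ← NNReal.coe_le_coe]
  · push_cast
    apply add_pow_succ_div_add_pow_le <;> positivity
  all_goals exact pow_ne_zero _ (by positivity)

variable {α : Type*} [MeasurableSpace α] {ν : Measure α}

theorem rpow_succ_mul_lintegral_add_rpow_neg_le {n : ℕ} (hn : n ≠ 0) {P Q : ℝ≥0∞}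
    (hP₀ : P ≠ 0) (hP : P ≠ ∞) (hQ₀ : Q ≠ 0) (hQ : Q ≠ ∞) {f g : α → ℝ≥0∞}
    (hf : AEMeasurable f ν) :
    (P + Q) ^ ((n : ℝ) + 1) * ∫⁻ x, (f x + g x) ^ (-(n : ℝ)) ∂ν ≤
      P ^ ((n : ℝ) + 1) * ∫⁻ x, f x ^ (-(n : ℝ)) ∂ν +
        Q ^ ((n : ℝ) + 1) * ∫⁻ x, g x ^ (-(n : ℝ)) ∂ν := by
  have hpos : (0 : ℝ) ≤ n + 1 := by positivity
  calc (P + Q) ^ ((n : ℝ) + 1) * ∫⁻ x, (f x + g x) ^ (-(n : ℝ)) ∂ν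
      = ∫⁻ x, (P + Q) ^ ((n : ℝ) + 1) * (f x + g x) ^ (-(n : ℝ)) ∂ν :=
        (lintegral_const_mul' _ _ (rpow_ne_top_of_nonneg hpos (add_ne_top.2 ⟨hP, hQ⟩))).symm
    _ ≤ ∫⁻ x, P ^ ((n : ℝ) + 1) * f x ^ (-(n : ℝ)) + Q ^ ((n : ℝ) + 1) * g x ^ (-(n : ℝ)) ∂ν :=
        lintegral_mono fun x => add_rpow_succ_mul_add_rpow_neg_le hn hP₀ hP hQ₀ hQ (f x) (g x)
    _ = _ := by
        rw [lintegral_add_left' ((hf.pow_const _).const_mul _),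
          lintegral_const_mul' _ _ (rpow_ne_top_of_nonneg hpos hP),
          lintegral_const_mul' _ _ (rpow_ne_top_of_nonneg hpos hQ)]

theorem lintegral_Lp_neg_add_ge {n : ℕ} (hn : n ≠ 0) {f g : α → ℝ≥0∞}
    (hf : AEMeasurable f ν) :
    (∫⁻ x, f x ^ (-(n : ℝ)) ∂ν) ^ (-(1 / (n : ℝ))) +
        (∫⁻ x, g x ^ (-(n : ℝ)) ∂ν) ^ (-(1 / (n : ℝ))) ≤
      (∫⁻ x, (f x + g x) ^ (-(n : ℝ)) ∂ν) ^ (-(1 / (n : ℝ))) := by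
  have hinv : -(1 / (n : ℝ)) ≤ 0 := by simp
  have hpow : ∀ J : ℝ≥0∞, (J ^ (-(1 / (n : ℝ)))) ^ (-(n : ℝ)) = J := fun J => by
    rw [← rpow_mul, show -(1 / (n : ℝ)) * -n = 1 by field_simp, rpow_one]
  set P := (∫⁻ x, f x ^ (-(n : ℝ)) ∂ν) ^ (-(1 / (n : ℝ)))
  set Q := (∫⁻ x, g x ^ (-(n : ℝ)) ∂ν) ^ (-(1 / (n : ℝ)))
  set I := ∫⁻ x, (f x + g x) ^ (-(n : ℝ)) ∂ν
  have hPI : P ≤ I ^ (-(1 / (n : ℝ))) := rpow_le_rpow_of_nonpos hinv <|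
    lintegral_mono fun x => rpow_le_rpow_of_nonpos (by simp) le_self_add
  have hQI : Q ≤ I ^ (-(1 / (n : ℝ))) := rpow_le_rpow_of_nonpos hinv <|
    lintegral_mono fun x => rpow_le_rpow_of_nonpos (by simp) le_add_self
  rcases eq_or_ne P 0 with hP₀ | hP₀
  · simpa [hP₀] using hQI
  rcases eq_or_ne Q 0 with hQ₀ | hQ₀
  · simpa [hQ₀] using hPI
  rcases eq_or_ne P ∞ with hP | hP
  · exact (top_le_iff.1 (hP ▸ hPI)).symm ▸ le_top
  rcases eq_or_ne Q ∞ with hQ | hQ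
  · exact (top_le_iff.1 (hQ ▸ hQI)).symm ▸ le_top
  have hS₀ : P + Q ≠ 0 := by simp [hP₀]
  have hS : P + Q ≠ ∞ := add_ne_top.2 ⟨hP, hQ⟩
  have hcancel : ∀ {J : ℝ≥0∞}, J ≠ 0 → J ≠ ∞ → J ^ ((n : ℝ) + 1) * J ^ (-(n : ℝ)) = J :=
    fun hJ₀ hJ => by rw [← rpow_add _ _ hJ₀ hJ]; norm_num
  have hfP : ∫⁻ x, f x ^ (-(n : ℝ)) ∂ν = P ^ (-(n : ℝ)) := (hpow _).symm
  have hgQ : ∫⁻ x, g x ^ (-(n : ℝ)) ∂ν = Q ^ (-(n : ℝ)) := (hpow _).symm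
  have key : (P + Q) ^ ((n : ℝ) + 1) * I ≤ P + Q := by
    have h := rpow_succ_mul_lintegral_add_rpow_neg_le hn hP₀ hP hQ₀ hQ (g := g) hf
    rwa [hfP, hgQ, hcancel hP₀ hP, hcancel hQ₀ hQ] at h
  have hI : I ≤ (P + Q) ^ (-(n : ℝ)) := by
    rw [show -(n : ℝ) = 1 - (n + 1) by ring, rpow_sub _ _ hS₀ hS, rpow_one,
      ENNReal.le_div_iff_mul_le (by simp [hS₀]) (by simp [hS]), mul_comm]
    exact key
  calc P + Q = ((P + Q) ^ (-(n : ℝ))) ^ (-(1 / (n : ℝ))) := by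
        rw [← rpow_mul, show -(n : ℝ) * -(1 / n) = 1 by field_simp, rpow_one]
    _ ≤ I ^ (-(1 / (n : ℝ))) := rpow_le_rpow_of_nonpos hinv hI

end ENNReal

theorem measurable_PsiM {n : ℕ} (μ : Measure (EuclideanSpace ℝ (Fin n))) [SFinite μ]
    {σ : EuclideanSpace ℝ (Fin n) → EuclideanSpace ℝ (Fin n)} (hσ : Measurable σ) :
    Measurable (PsiM μ σ) :=
  Measurable.lintegral_prod_right' <| ENNReal.measurable_ofReal.comp <|
    continuous_abs.measurable.comp <|
      continuous_inner.measurable.comp ((hσ.comp measurable_snd).prodMk measurable_fst)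

theorem PsiM_restrict_add_compl {n : ℕ} (μ : Measure (EuclideanSpace ℝ (Fin n)))
    (σ : EuclideanSpace ℝ (Fin n) → EuclideanSpace ℝ (Fin n))
    {A : Set (EuclideanSpace ℝ (Fin n))} (hA : MeasurableSet A) (ξ : EuclideanSpace ℝ (Fin n)) :
    PsiM (μ.restrict A) σ ξ + PsiM (μ.restrict Aᶜ) σ ξ = PsiM μ σ ξ :=
  lintegral_add_compl _ hA

theorem energyM_restrict_superadd_general {n : ℕ} (hn : 2 ≤ n)
    (μ : Measure (EuclideanSpace ℝ (Fin n))) [IsFiniteMeasure μ]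
    (σ : EuclideanSpace ℝ (Fin n) → EuclideanSpace ℝ (Fin n)) (hσm : Measurable σ)
    (A : Set (EuclideanSpace ℝ (Fin n))) (hA : MeasurableSet A) :
    energyM μ σ ≥ energyM (μ.restrict A) σ + energyM (μ.restrict Aᶜ) σ := by
  have h := ENNReal.lintegral_Lp_neg_add_ge (ν := sphereMeasure n) (n := n) (by omega)
    (measurable_PsiM (μ.restrict A) hσm).aemeasurable (g := PsiM (μ.restrict Aᶜ) σ)
  simp only [PsiM_restrict_add_compl μ σ hA] at h
  simp only [energyM, ge_iff_le, ← mul_add]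
  exact mul_le_mul_right h _

/-- superadditivity of the affine energy under restriction of the measure to a
Borel set and its complement. -/
theorem energyM_restrict_superadd {n : ℕ} (hn : 2 ≤ n)
    (μ : Measure (EuclideanSpace ℝ (Fin n))) [IsFiniteMeasure μ]
    (σ : EuclideanSpace ℝ (Fin n) → EuclideanSpace ℝ (Fin n)) (hσm : Measurable σ)
    (hσ : ∀ᵐ x ∂μ, ‖σ x‖ = 1)
    (A : Set (EuclideanSpace ℝ (Fin n))) (hA : MeasurableSet A) :
    energyM μ σ ≥ energyM (μ.restrict A) σ + energyM (μ.restrict Aᶜ) σ :=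
  energyM_restrict_superadd_general hn μ σ hσm A hA

end
end

section
/- Let Ω ⊆ ℝⁿ be a measurable set with 0 < |Ω| < ∞ (Lebesgue measure), let r ≥ 1, and let m_r : L^r(Ω) → ℝ be the unique function satisfying ∫_Ω |u(x) − m_r(u)|^{r−1} (u(x) − m_r(u)) dx = 0 for every u ∈ L^r(Ω). Then: (i) m_r is continuous with respect to the L^r norm; (ii) m_r is 1-homogeneous, i.e. m_r(t u) = t m_r(u) for every t ∈ ℝ and u ∈ L^r(Ω); and (iii) there exists a constant C > 0 such that |m_r(u)| ≤ C ‖u‖_{L^r(Ω)} for all u ∈ L^r(Ω). -/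
/-!
Since `φ(t) = |t| ^ (r - 1) * t` is strictly increasing, `c ↦ ∫ φ(u - c)` is strictly decreasing,
so `m u` is its unique zero; homogeneity then follows from `φ(t * s) = φ(t) * φ(s)`. The zero of a
strictly decreasing family depends continuously on the parameter as soon as each value
`u ↦ ∫ φ(u - c)` does, and that continuity on `L^r` comes from the pointwise bound
`|φ a - φ b| ≤ ε |b| ^ r + C_ε |a - b| ^ r`. Finally, a continuous `1`-homogeneous function on a
normed space is bounded by a multiple of the norm.
-/

open MeasureTheory Filter Topology

noncomputable def oddPow (r t : ℝ) : ℝ := |t| ^ (r - 1) * t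

section oddPow

variable {r : ℝ}

lemma oddPow_of_nonneg (hr : r ≠ 0) {t : ℝ} (ht : 0 ≤ t) : oddPow r t = t ^ r := by
  rcases ht.eq_or_lt with rfl | ht
  · simp [oddPow, Real.zero_rpow hr]
  · rw [oddPow, abs_of_pos ht, ← Real.rpow_add_one ht.ne', sub_add_cancel]

lemma oddPow_neg (r t : ℝ) : oddPow r (-t) = -oddPow r t := by
  simp only [oddPow, abs_neg, mul_neg]

lemma oddPow_mul (r s t : ℝ) : oddPow r (s * t) = oddPow r s * oddPow r t := by
  simp only [oddPow, abs_mul, Real.mul_rpow (abs_nonneg s) (abs_nonneg t)]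
  ring

lemma abs_oddPow (hr : r ≠ 0) (t : ℝ) : |oddPow r t| = |t| ^ r := by
  rw [← oddPow_of_nonneg hr (abs_nonneg t), oddPow, oddPow, abs_mul, abs_abs,
    abs_of_nonneg (Real.rpow_nonneg (abs_nonneg t) _)]

lemma strictMono_oddPow (hr : 0 < r) : StrictMono (oddPow r) :=
  strictMono_of_odd_strictMonoOn_nonneg (oddPow_neg r) fun _ hs _ ht hst => by
    rw [oddPow_of_nonneg hr.ne' hs, oddPow_of_nonneg hr.ne' ht]
    exact Real.rpow_lt_rpow hs hst hr

lemma continuous_oddPow (hr : 1 ≤ r) : Continuous (oddPow r) :=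
  ((Real.continuous_rpow_const (by linarith)).comp continuous_abs).mul continuous_id

/-- If `|a - b| ≥ κ |b|`, both `|a| ^ r` and `|b| ^ r` are bounded by multiples of `|a - b| ^ r`;
otherwise scaling by `|b|` reduces the estimate to uniform continuity of `oddPow r` on `[-2, 2]`. -/
lemma exists_abs_oddPow_sub_le (hr : 1 ≤ r) {ε : ℝ} (hε : 0 < ε) :
    ∃ C, ∀ a b : ℝ, |oddPow r a - oddPow r b| ≤ ε * |b| ^ r + C * |a - b| ^ r := by
  have hr0 : r ≠ 0 := by positivity
  obtain ⟨δ, hδ, hunif⟩ := Metric.uniformContinuousOn_iff.1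
    ((isCompact_closedBall (0 : ℝ) 2).uniformContinuousOn_of_continuous
      (continuous_oddPow hr).continuousOn) ε hε
  set κ := min δ 1
  have hκ : 0 < κ := lt_min hδ one_pos
  refine ⟨(κ⁻¹ + 1) ^ r + κ⁻¹ ^ r, fun a b => ?_⟩
  have hεb : 0 ≤ ε * |b| ^ r := by positivity
  have hCd : 0 ≤ ((κ⁻¹ + 1) ^ r + κ⁻¹ ^ r) * |a - b| ^ r := by positivity
  rcases lt_or_ge |a - b| (κ * |b|) with hnear | hfar
  · have hb : 0 < |b| := pos_of_mul_pos_right ((abs_nonneg _).trans_lt hnear) hκ.le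
    have hscale (t : ℝ) : oddPow r t = |b| ^ r * oddPow r (t / |b|) := by
      rw [← oddPow_of_nonneg hr0 hb.le, ← oddPow_mul, mul_div_cancel₀ _ hb.ne']
    have hdist : dist (a / |b|) (b / |b|) < κ := by
      rwa [Real.dist_eq, ← sub_div, abs_div, abs_abs, div_lt_iff₀ hb]
    have hy : dist (b / |b|) 0 = 1 := by simp [hb.ne']
    have hx : a / |b| ∈ Metric.closedBall (0 : ℝ) 2 := by
      rw [Metric.mem_closedBall]
      linarith [dist_triangle (a / |b|) (b / |b|) 0, min_le_right δ 1]
    have hclose := hunif _ hx _ (by rw [Metric.mem_closedBall, hy]; norm_num)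
      (hdist.trans_le (min_le_left δ 1))
    rw [Real.dist_eq] at hclose
    calc |oddPow r a - oddPow r b|
        = |b| ^ r * |oddPow r (a / |b|) - oddPow r (b / |b|)| := by
          rw [hscale a, hscale b, ← mul_sub, abs_mul, abs_of_pos (by positivity)]
      _ ≤ ε * |b| ^ r := by rw [mul_comm]; gcongr
      _ ≤ _ := le_add_of_nonneg_right hCd
  · have hb : |b| ≤ κ⁻¹ * |a - b| := by rwa [inv_mul_eq_div, le_div_iff₀' hκ]
    have ha : |a| ≤ (κ⁻¹ + 1) * |a - b| := by
      have := abs_sub_abs_le_abs_sub a b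
      linarith
    calc |oddPow r a - oddPow r b| ≤ |a| ^ r + |b| ^ r := by
          simpa only [abs_oddPow hr0] using abs_sub (oddPow r a) (oddPow r b)
      _ ≤ ((κ⁻¹ + 1) * |a - b|) ^ r + (κ⁻¹ * |a - b|) ^ r := by gcongr
      _ = ((κ⁻¹ + 1) ^ r + κ⁻¹ ^ r) * |a - b| ^ r := by
          rw [Real.mul_rpow (by positivity) (abs_nonneg _),
            Real.mul_rpow (by positivity) (abs_nonneg _)]
          ring
      _ ≤ _ := le_add_of_nonneg_left hεb

end oddPow

section Integral

variable {α : Type*} [MeasurableSpace α] {μ : Measure α} {r : ℝ}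

lemma MeasureTheory.MemLp.integrable_rpow_abs (hr : 0 < r) {f : α → ℝ}
    (hf : MemLp f (ENNReal.ofReal r) μ) : Integrable (fun x => |f x| ^ r) μ := by
  simpa [ENNReal.toReal_ofReal hr.le] using
    hf.integrable_norm_rpow (by simpa using hr) ENNReal.ofReal_ne_top

lemma MeasureTheory.MemLp.integrable_oddPow (hr : 1 ≤ r) {f : α → ℝ}
    (hf : MemLp f (ENNReal.ofReal r) μ) : Integrable (fun x => oddPow r (f x)) μ := by
  refine (hf.integrable_rpow_abs (by positivity)).mono'
    ((continuous_oddPow hr).comp_aestronglyMeasurable hf.1) (.of_forall fun x => ?_)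
  rw [Real.norm_eq_abs, abs_oddPow (by positivity)]

lemma strictAnti_integral_oddPow_sub [IsFiniteMeasure μ] (hμ : μ ≠ 0) (hr : 1 ≤ r) {f : α → ℝ}
    (hf : MemLp f (ENNReal.ofReal r) μ) : StrictAnti fun c => ∫ x, oddPow r (f x - c) ∂μ := by
  intro c d hcd
  have hint (c : ℝ) : Integrable (fun x => oddPow r (f x - c)) μ :=
    (hf.sub (memLp_const c)).integrable_oddPow hr
  have hpos (x : α) : 0 < oddPow r (f x - c) - oddPow r (f x - d) :=
    sub_pos.2 (strictMono_oddPow (by positivity) (by linarith))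
  have hint_pos :=
    (integral_pos_iff_support_of_nonneg (fun x => (hpos x).le) ((hint c).sub (hint d))).2
  rw [Function.support_eq_univ fun x => (hpos x).ne', integral_sub (hint c) (hint d)] at hint_pos
  exact sub_pos.1 (hint_pos (Measure.measure_univ_pos.2 hμ))

lemma integral_rpow_abs_eq_norm_rpow (hr : 0 < r) (w : Lp ℝ (ENNReal.ofReal r) μ) :
    ∫ x, |w x| ^ r ∂μ = ‖w‖ ^ r := by
  rw [Lp.norm_def, toReal_eLpNorm (Lp.aestronglyMeasurable w),
    lpNorm_eq_integral_norm_rpow_toReal (by simpa using hr) ENNReal.ofReal_ne_top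
      (Lp.aestronglyMeasurable w), ENNReal.toReal_ofReal hr.le,
    Real.rpow_inv_rpow (integral_nonneg fun x => by positivity) hr.ne']
  simp only [Real.norm_eq_abs]

lemma abs_integral_oddPow_sub_le (hr : 1 ≤ r) {ε C : ℝ}
    (hC : ∀ a b : ℝ, |oddPow r a - oddPow r b| ≤ ε * |b| ^ r + C * |a - b| ^ r) {f g : α → ℝ}
    (hf : MemLp f (ENNReal.ofReal r) μ) (hg : MemLp g (ENNReal.ofReal r) μ) :
    |∫ x, oddPow r (g x) ∂μ - ∫ x, oddPow r (f x) ∂μ|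
      ≤ ε * ∫ x, |f x| ^ r ∂μ + C * ∫ x, |g x - f x| ^ r ∂μ := by
  have hfr := hf.integrable_rpow_abs (by positivity)
  have hgfr : Integrable (fun x => |g x - f x| ^ r) μ :=
    (hg.sub hf).integrable_rpow_abs (by positivity)
  rw [← integral_sub (hg.integrable_oddPow hr) (hf.integrable_oddPow hr), ← integral_const_mul,
    ← integral_const_mul, ← integral_add (hfr.const_mul ε) (hgfr.const_mul C)]
  exact (abs_integral_le_integral_abs).trans
    (integral_mono_of_nonneg (.of_forall fun x => abs_nonneg _)
      ((hfr.const_mul ε).add (hgfr.const_mul C)) (.of_forall fun x => hC (g x) (f x)))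

lemma continuous_integral_oddPow_sub [IsFiniteMeasure μ] [Fact (1 ≤ ENNReal.ofReal r)]
    (hr : 1 ≤ r) (c : ℝ) :
    Continuous fun v : Lp ℝ (ENNReal.ofReal r) μ => ∫ x, oddPow r (v x - c) ∂μ := by
  refine continuous_iff_continuousAt.2 fun u => Metric.tendsto_nhds.2 fun η hη => ?_
  set I := ∫ x, |u x - c| ^ r ∂μ
  have hI : 0 ≤ I := integral_nonneg fun x => by positivity
  obtain ⟨C, hC⟩ := exists_abs_oddPow_sub_le hr (ε := η / (2 * (I + 1))) (by positivity)
  have hεI : η / (2 * (I + 1)) * I < η / 2 := by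
    rw [div_mul_eq_mul_div, div_lt_div_iff₀ (by positivity) two_pos]
    nlinarith
  have hsmall : ∀ᶠ v in 𝓝 u, C * ‖v - u‖ ^ r < η / 2 := by
    have : Tendsto (fun v => C * ‖v - u‖ ^ r) (𝓝 u) (𝓝 (C * 0 ^ r)) :=
      ((tendsto_norm_sub_self u).rpow_const (.inr (by linarith))).const_mul C
    rw [Real.zero_rpow (by positivity), mul_zero] at this
    exact this.eventually (gt_mem_nhds (by positivity))
  filter_upwards [hsmall] with v hv
  have hmem (w : Lp ℝ (ENNReal.ofReal r) μ) := (Lp.memLp w).sub (memLp_const c)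
  have hest := abs_integral_oddPow_sub_le hr hC (hmem u) (hmem v)
  have hvu : ∫ x, |(v x - c) - (u x - c)| ^ r ∂μ = ‖v - u‖ ^ r := by
    rw [← integral_rpow_abs_eq_norm_rpow (by linarith)]
    refine integral_congr_ae ?_
    filter_upwards [Lp.coeFn_sub v u] with x hx
    rw [hx, Pi.sub_apply, sub_sub_sub_cancel_right]
  rw [Real.dist_eq]
  simp only [Pi.sub_apply, hvu] at hest
  linarith

lemma integral_oddPow_smul_sub (t c : ℝ) (u : Lp ℝ (ENNReal.ofReal r) μ) :
    ∫ x, oddPow r ((t • u) x - t * c) ∂μ = oddPow r t * ∫ x, oddPow r (u x - c) ∂μ := by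
  rw [← integral_const_mul]
  refine integral_congr_ae ?_
  filter_upwards [Lp.coeFn_smul t u] with x hx
  rw [hx, Pi.smul_apply, smul_eq_mul, ← mul_sub, oddPow_mul]

end Integral

lemma continuous_of_strictAnti_of_apply_eq_zero {X : Type*} [TopologicalSpace X]
    {F : X → ℝ → ℝ} {m : X → ℝ} (hanti : ∀ x, StrictAnti (F x))
    (hcont : ∀ c, Continuous fun x => F x c) (hzero : ∀ x, F x (m x) = 0) : Continuous m := by
  refine continuous_iff_continuousAt.2 fun x => tendsto_order.2 ⟨fun a ha => ?_, fun b hb => ?_⟩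
  · have : 0 < F x a := hzero x ▸ hanti x ha
    filter_upwards [continuousAt_const.eventually_lt (hcont a).continuousAt this] with y hy
    exact (hanti y).lt_iff_gt.1 (by rwa [hzero])
  · have : F x b < 0 := hzero x ▸ hanti x hb
    filter_upwards [(hcont b).continuousAt.eventually_lt continuousAt_const this] with y hy
    exact (hanti y).lt_iff_gt.1 (by rwa [hzero])

lemma exists_abs_le_mul_norm_of_homogeneous {E : Type*} [NormedAddCommGroup E]
    [NormedSpace ℝ E] {m : E → ℝ} (hm : ContinuousAt m 0)
    (hhom : ∀ (t : ℝ) u, m (t • u) = t * m u) :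
    ∃ C > 0, ∀ u, |m u| ≤ C * ‖u‖ := by
  have hm0 : m 0 = 0 := by simpa using hhom 0 0
  obtain ⟨δ, hδ, hball⟩ := Metric.continuousAt_iff.1 hm 1 one_pos
  refine ⟨2 / δ, by positivity, fun u => ?_⟩
  rcases eq_or_ne u 0 with rfl | hu
  · simp [hm0]
  have hu : 0 < ‖u‖ := norm_pos_iff.2 hu
  set t := δ / (2 * ‖u‖)
  have ht : 0 < t := by positivity
  have hsmall : dist (t • u) 0 < δ := by
    rw [dist_zero_right, norm_smul, Real.norm_of_nonneg ht.le, div_mul_eq_mul_div,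
      mul_div_mul_right _ _ hu.ne']
    linarith
  have hmt := hball hsmall
  rw [Real.dist_eq, hm0, sub_zero, hhom, abs_mul, abs_of_pos ht] at hmt
  calc |m u| = t⁻¹ * (t * |m u|) := by field_simp
    _ ≤ t⁻¹ * 1 := by gcongr
    _ = 2 / δ * ‖u‖ := by simp only [t]; field_simp

theorem generalized_median_properties_general {n : ℕ}
    (Ω : Set (EuclideanSpace ℝ (Fin n)))
    (hΩpos : 0 < volume Ω) (hΩfin : volume Ω < ⊤)
    (r : ℝ) (hr : 1 ≤ r) [Fact (1 ≤ ENNReal.ofReal r)]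
    (m : Lp ℝ (ENNReal.ofReal r) (volume.restrict Ω) → ℝ)
    (hm : ∀ u : Lp ℝ (ENNReal.ofReal r) (volume.restrict Ω),
      ∫ x in Ω, |u x - m u| ^ (r - 1) * (u x - m u) = 0) :
    Continuous m ∧
    (∀ (t : ℝ) (u : Lp ℝ (ENNReal.ofReal r) (volume.restrict Ω)), m (t • u) = t * m u) ∧
    ∃ C > (0 : ℝ), ∀ u : Lp ℝ (ENNReal.ofReal r) (volume.restrict Ω), |m u| ≤ C * ‖u‖ := by
  have : IsFiniteMeasure (volume.restrict Ω) := isFiniteMeasure_restrict.2 hΩfin.ne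
  have hμ : volume.restrict Ω ≠ 0 := by rw [Ne, Measure.restrict_eq_zero]; exact hΩpos.ne'
  have hanti (u : Lp ℝ (ENNReal.ofReal r) (volume.restrict Ω)) :=
    strictAnti_integral_oddPow_sub hμ hr (Lp.memLp u)
  have hhom (t : ℝ) (u : Lp ℝ (ENNReal.ofReal r) (volume.restrict Ω)) : m (t • u) = t * m u :=
    (hanti (t • u)).injective <| (hm (t • u)).trans <| by
      show 0 = ∫ x, oddPow r ((t • u) x - t * m u) ∂volume.restrict Ω
      rw [integral_oddPow_smul_sub]; exact (mul_eq_zero_of_right _ (hm u)).symm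
  have hcont : Continuous m :=
    continuous_of_strictAnti_of_apply_eq_zero hanti (continuous_integral_oddPow_sub hr) hm
  exact ⟨hcont, hhom, exists_abs_le_mul_norm_of_homogeneous hcont.continuousAt hhom⟩

/-- the generalized median map m_r on L^r(Ω) (defined by the vanishing of
∫_Ω |u − m_r(u)|^{r−1}(u − m_r(u)) dx, with real powers and 0^0 = 1) is continuous,
1-homogeneous, and bounded on bounded sets (|m_r(u)| ≤ C‖u‖_{L^r}). The `Fact` instance
records that 1 ≤ r also as an inequality in ℝ≥0∞, so that L^r carries its norm topology. -/
theorem generalized_median_properties {n : ℕ}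
    (Ω : Set (EuclideanSpace ℝ (Fin n))) (hΩm : MeasurableSet Ω)
    (hΩpos : 0 < volume Ω) (hΩfin : volume Ω < ⊤)
    (r : ℝ) (hr : 1 ≤ r) [Fact (1 ≤ ENNReal.ofReal r)]
    (m : Lp ℝ (ENNReal.ofReal r) (volume.restrict Ω) → ℝ)
    (hm : ∀ u : Lp ℝ (ENNReal.ofReal r) (volume.restrict Ω),
      ∫ x in Ω, |u x - m u| ^ (r - 1) * (u x - m u) = 0) :
    Continuous m ∧
    (∀ (t : ℝ) (u : Lp ℝ (ENNReal.ofReal r) (volume.restrict Ω)), m (t • u) = t * m u) ∧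
    ∃ C > (0 : ℝ), ∀ u : Lp ℝ (ENNReal.ofReal r) (volume.restrict Ω), |m u| ≤ C * ‖u‖ :=
  generalized_median_properties_general Ω hΩpos hΩfin r hr m hm
end
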